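/- arXiv:1705.04775 — 2 statements merged into one kernel-verified Lean document; each statement's English description precedes it below -/
import Mathlib

section
/- Assume (V₁), (V₂), (V₃) and set M₀ := V_∞/2 and Λ₀ := (M₀ + δ)/M₀. Then there exists a constant C > 0, independent of λ, such that for every λ > Λ₀ and every u ∈ X one has ‖u‖_{H²(ℝ^N)} ≤ C‖u‖_{λ,0}; in fact one may take C = √((M₀+1)/M₀ + C₁|B_R|^{4/N}), where C₁ is the Sobolev embedding constant of H²(ℝ^N) into L^{2N/(N−4)}(ℝ^N) and R > 0 satisfies {x ∈ ℝ^N : V(x) ≤ M₀} ⊂ B_R(0). -/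
noncomputable section

open MeasureTheory Filter Topology Asymptotics
open scoped ENNReal NNReal

abbrev Euc (N : ℕ) := EuclideanSpace ℝ (Fin N)

/-- The second directional derivative ∂²u/∂xᵢ∂xⱼ. -/
def d2 {N : ℕ} (u : Euc N → ℝ) (i j : Fin N) (x : Euc N) : ℝ :=
  iteratedFDeriv ℝ 2 u x ![EuclideanSpace.single i 1, EuclideanSpace.single j 1]

/-- The Laplacian Δu. -/
def lap {N : ℕ} (u : Euc N → ℝ) (x : Euc N) : ℝ := ∑ i, d2 u i i x

/-- Membership in H²(ℝ^N), modeled by C² representatives with u and its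
derivatives up to order two in L². -/
def MemH2 {N : ℕ} (u : Euc N → ℝ) : Prop :=
  ContDiff ℝ 2 u ∧ MemLp u 2 (volume : Measure (Euc N)) ∧
  (∀ i, MemLp (fun x => fderiv ℝ u x (EuclideanSpace.single i 1)) 2 (volume : Measure (Euc N))) ∧
  (∀ i j, MemLp (d2 u i j) 2 (volume : Measure (Euc N)))

/-- The (squared) H²-norm ∫ (|Δu|² + u²), the norm used throughout. -/
def normH2sq {N : ℕ} (u : Euc N → ℝ) : ℝ := ∫ x, ((lap u x) ^ 2 + (u x) ^ 2)

/-- Squared H²-distance between two functions. -/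
def distH2sq {N : ℕ} (u v : Euc N → ℝ) : ℝ :=
  ∫ x, ((lap u x - lap v x) ^ 2 + (u x - v x) ^ 2)

/-- Membership in X = {u ∈ H² : ∫ V u² < ∞}. -/
def MemX {N : ℕ} (V u : Euc N → ℝ) : Prop :=
  MemH2 u ∧ Integrable (fun x => V x * (u x) ^ 2) volume

/-- V_λ = λV − δ. -/
def Vlam {N : ℕ} (V : Euc N → ℝ) (lam dlt : ℝ) (x : Euc N) : ℝ := lam * V x - dlt

/-- ‖u‖_λ² = ∫ (|Δu|² + V_λ u²).  -/
def normLamSq {N : ℕ} (V : Euc N → ℝ) (lam dlt : ℝ) (u : Euc N → ℝ) : ℝ :=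
  ∫ x, ((lap u x) ^ 2 + Vlam V lam dlt x * (u x) ^ 2)

/-- ‖u‖_{λ,0}² = ∫ (|Δu|² + V_λ⁺ u²). -/
def normLam0Sq {N : ℕ} (V : Euc N → ℝ) (lam dlt : ℝ) (u : Euc N → ℝ) : ℝ :=
  ∫ x, ((lap u x) ^ 2 + max (Vlam V lam dlt x) 0 * (u x) ^ 2)

/-- The energy functional J_λ. -/
def Jlam {N : ℕ} (V : Euc N → ℝ) (lam dlt p : ℝ) (u : Euc N → ℝ) : ℝ :=
  (1 / 2) * normLamSq V lam dlt u - (1 / p) * ∫ x, |u x| ^ p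

/-- The Fréchet derivative ⟨J'_λ(u), w⟩. -/
def JlamDeriv {N : ℕ} (V : Euc N → ℝ) (lam dlt p : ℝ) (u w : Euc N → ℝ) : ℝ :=
  (∫ x, (lap u x * lap w x + Vlam V lam dlt x * u x * w x)) -
    ∫ x, |u x| ^ (p - 2) * u x * w x

/-- The Nehari manifold 𝒩_λ. -/
def Nehari {N : ℕ} (V : Euc N → ℝ) (lam dlt p : ℝ) : Set (Euc N → ℝ) :=
  {u | MemX V u ∧ u ≠ 0 ∧ normLamSq V lam dlt u = ∫ x, |u x| ^ p}

/-- The least energy level c_λ = inf_{𝒩_λ} J_λ. -/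
def clam {N : ℕ} (V : Euc N → ℝ) (lam dlt p : ℝ) : ℝ :=
  sInf {r | ∃ u ∈ Nehari V lam dlt p, r = Jlam V lam dlt p u}

/-- u is a weak solution of Δ²u + (λV − δ)u = |u|^{p−2}u in ℝ^N. -/
def IsWeakSol {N : ℕ} (V : Euc N → ℝ) (lam dlt p : ℝ) (u : Euc N → ℝ) : Prop :=
  MemX V u ∧ ∀ w, MemX V w → JlamDeriv V lam dlt p u w = 0

/-- (PS)_c sequence for J_λ: J_λ(u_n) → c and J'_λ(u_n) → 0 in X_λ*. -/
def IsPSseq {N : ℕ} (V : Euc N → ℝ) (lam dlt p c : ℝ) (u : ℕ → Euc N → ℝ) : Prop :=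
  (∀ n, MemX V (u n)) ∧
  Tendsto (fun n => Jlam V lam dlt p (u n)) atTop (nhds c) ∧
  ∃ e : ℕ → ℝ, Tendsto e atTop (nhds 0) ∧
    ∀ n w, MemX V w →
      |JlamDeriv V lam dlt p (u n) w| ≤ e n * Real.sqrt (normLamSq V lam dlt w)

/-- Membership in H(Ω) = H²(Ω) ∩ H₀¹(Ω), modeled by C² (on the closure of Ω)
representatives vanishing on ∂Ω. -/
def MemHOm {N : ℕ} (Om : Set (Euc N)) (u : Euc N → ℝ) : Prop :=
  ContDiffOn ℝ 2 u (closure Om) ∧ ∀ x ∈ frontier Om, u x = 0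

/-- The limit-problem functional J_Ω. -/
def JOm {N : ℕ} (Om : Set (Euc N)) (dlt p : ℝ) (u : Euc N → ℝ) : ℝ :=
  (1 / 2) * ∫ x in Om, ((lap u x) ^ 2 - dlt * (u x) ^ 2) - (1 / p) * ∫ x in Om, |u x| ^ p

/-- ⟨J'_Ω(u), w⟩. -/
def JOmDeriv {N : ℕ} (Om : Set (Euc N)) (dlt p : ℝ) (u w : Euc N → ℝ) : ℝ :=
  (∫ x in Om, (lap u x * lap w x - dlt * u x * w x)) -
    ∫ x in Om, |u x| ^ (p - 2) * u x * w x

/-- The Nehari manifold 𝒩_Ω of the limit problem. -/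
def NehariOm {N : ℕ} (Om : Set (Euc N)) (dlt p : ℝ) : Set (Euc N → ℝ) :=
  {u | MemHOm Om u ∧ ¬(∀ x ∈ Om, u x = 0) ∧
    (∫ x in Om, ((lap u x) ^ 2 - dlt * (u x) ^ 2)) = ∫ x in Om, |u x| ^ p}

/-- c(Ω) = inf_{𝒩_Ω} J_Ω. -/
def cOm {N : ℕ} (Om : Set (Euc N)) (dlt p : ℝ) : ℝ :=
  sInf {r | ∃ u ∈ NehariOm Om dlt p, r = JOm Om dlt p u}

/-- u is a weak solution of the Navier problem Δ²u − δu = |u|^{p−2}u in Ω,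
u = Δu = 0 on ∂Ω (critical point of J_Ω on H(Ω)). -/
def IsWeakSolOm {N : ℕ} (Om : Set (Euc N)) (dlt p : ℝ) (u : Euc N → ℝ) : Prop :=
  MemHOm Om u ∧ ∀ w, MemHOm Om w → JOmDeriv Om dlt p u w = 0

/-- The principal eigenvalue μ₀ of Δ² on H(Ω). -/
def mu0 {N : ℕ} (Om : Set (Euc N)) : ℝ :=
  sInf {r | ∃ u, MemHOm Om u ∧ (∫ x in Om, (u x) ^ 2) = 1 ∧ r = ∫ x in Om, (lap u x) ^ 2}

/-- μ(L₀) = inf { ∫_Ω (|Δu|² − δu²) : u ∈ H(Ω), ∫_Ω u² = 1 }. -/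
def muL0 {N : ℕ} (Om : Set (Euc N)) (dlt : ℝ) : ℝ :=
  sInf {r | ∃ u, MemHOm Om u ∧ (∫ x in Om, (u x) ^ 2) = 1 ∧
    r = ∫ x in Om, ((lap u x) ^ 2 - dlt * (u x) ^ 2)}

/-- μ(L_λ) = inf { ∫ (|Δu|² + V_λu²) : u ∈ X, ∫ u² = 1 }. -/
def muLlam {N : ℕ} (V : Euc N → ℝ) (lam dlt : ℝ) : ℝ :=
  sInf {r | ∃ u, MemX V u ∧ (∫ x, (u x) ^ 2) = 1 ∧ r = normLamSq V lam dlt u}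

/-- Ω has smooth boundary: near every boundary point, Ω is the sublevel set of a
smooth defining function with nonvanishing gradient on the boundary. -/
def HasSmoothBoundary {N : ℕ} (Om : Set (Euc N)) : Prop :=
  ∀ x ∈ frontier Om, ∃ (U : Set (Euc N)) (f : Euc N → ℝ),
    IsOpen U ∧ x ∈ U ∧ ContDiff ℝ (⊤ : ℕ∞) f ∧
    (∀ y ∈ U, (y ∈ Om ↔ f y < 0)) ∧ ∀ y ∈ U, f y = 0 → fderiv ℝ f y ≠ 0

/-- The best Sobolev constant S of the embedding of H²(ℝ^N) into L^{2N/(N−4)}. -/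
def SobolevS (N : ℕ) : ℝ :=
  sInf {r | ∃ u : Euc N → ℝ, MemH2 u ∧
    (∫ x, |u x| ^ (2 * (N : ℝ) / ((N : ℝ) - 4))) = 1 ∧ r = ∫ x, (lap u x) ^ 2}

/-- The bubble U_ε(x) = c_N (ε/(ε² + |x|²))^{(N−4)/2}. -/
def Ueps (N : ℕ) (cN e : ℝ) (x : Euc N) : ℝ :=
  cN * (e / (e ^ 2 + ‖x‖ ^ 2)) ^ (((N : ℝ) - 4) / 2)

/-- μ belongs to the essential spectrum of L_λ = Δ² + V_λ (Weyl-type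
characterization via singular sequences in the form domain X). -/
def InEssSpec {N : ℕ} (V : Euc N → ℝ) (lam dlt mu : ℝ) : Prop :=
  ∃ u : ℕ → Euc N → ℝ, (∀ n, MemX V (u n)) ∧ (∀ n, (∫ x, (u n x) ^ 2) = 1) ∧
    (∀ w, MemX V w → Tendsto (fun n => ∫ x, u n x * w x) atTop (nhds 0)) ∧
    ∃ e : ℕ → ℝ, Tendsto e atTop (nhds 0) ∧
      ∀ n w, MemX V w →
        |(∫ x, (lap (u n) x * lap w x + Vlam V lam dlt x * u n x * w x)) -
            mu * ∫ x, u n x * w x| ≤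
          e n * Real.sqrt (normLam0Sq V lam dlt w + ∫ x, (w x) ^ 2)


variable {N : ℕ}

lemma d2_eq' (u : Euc N → ℝ) (i j : Fin N) (x : Euc N) :
    d2 u i j x = fderiv ℝ (fderiv ℝ u) x (EuclideanSpace.single i 1) (EuclideanSpace.single j 1) := by
  rw [d2, iteratedFDeriv_two_apply]; simp

lemma continuous_d2 {u : Euc N → ℝ} (hu : ContDiff ℝ 2 u) (i j : Fin N) :
    Continuous (d2 u i j) := by
  have h : Continuous (iteratedFDeriv ℝ 2 u) := hu.continuous_iteratedFDeriv (by norm_num)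
  exact (continuous_eval_const _).comp h

lemma continuous_lap {u : Euc N → ℝ} (hu : ContDiff ℝ 2 u) : Continuous (lap u) := by
  unfold lap; exact continuous_finset_sum _ (fun i _ => continuous_d2 hu i i)

lemma d2_mul {f g : Euc N → ℝ} (hf : ContDiff ℝ 2 f) (hg : ContDiff ℝ 2 g) (i j : Fin N)
    (x : Euc N) :
    d2 (fun y => f y * g y) i j x =
      f x * d2 g i j x + fderiv ℝ f x (EuclideanSpace.single i 1) * fderiv ℝ g x (EuclideanSpace.single j 1)
        + fderiv ℝ g x (EuclideanSpace.single i 1) * fderiv ℝ f x (EuclideanSpace.single j 1)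
        + g x * d2 f i j x := by
  have hf1 : Differentiable ℝ f := hf.differentiable two_ne_zero
  have hg1 : Differentiable ℝ g := hg.differentiable two_ne_zero
  have hf' : ContDiff ℝ 1 (fderiv ℝ f) := hf.fderiv_right (le_refl _)
  have hg' : ContDiff ℝ 1 (fderiv ℝ g) := hg.fderiv_right (le_refl _)
  have key : fderiv ℝ (fun y => f y * g y) = fun y => f y • fderiv ℝ g y + g y • fderiv ℝ f y := by
    funext y; exact fderiv_mul (hf1 y) (hg1 y)
  rw [d2_eq', key]
  have h1 : DifferentiableAt ℝ (fun y => f y • fderiv ℝ g y) x :=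
    (hf1 x).smul ((hg'.differentiable one_ne_zero) x)
  have h2 : DifferentiableAt ℝ (fun y => g y • fderiv ℝ f y) x :=
    (hg1 x).smul ((hf'.differentiable one_ne_zero) x)
  rw [fderiv_fun_add h1 h2, fderiv_fun_smul (hf1 x) ((hg'.differentiable one_ne_zero) x),
    fderiv_fun_smul (hg1 x) ((hf'.differentiable one_ne_zero) x)]
  simp only [ContinuousLinearMap.add_apply, ContinuousLinearMap.coe_smul', Pi.smul_apply,
    ContinuousLinearMap.smulRight_apply, smul_eq_mul, d2_eq']
  ring

lemma norm_single_one (i : Fin N) : ‖(EuclideanSpace.single i (1:ℝ) : Euc N)‖ = 1 := by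
  rw [EuclideanSpace.norm_single]; norm_num

lemma continuous_rpow_abs {u : Euc N → ℝ} (hu : Continuous u) {q : ℝ} (hq : 0 < q) :
    Continuous (fun x => |u x| ^ q) := by
  have h : Continuous (fun t : ℝ => t ^ q) := by
    rw [continuous_iff_continuousAt]
    exact fun t => Real.continuousAt_rpow_const t q (Or.inr hq.le)
  exact h.comp (continuous_abs.comp hu)

lemma integrable_rpow_of_memH2 (hN : 5 ≤ N) {C1 : ℝ} (hC1nn : 0 ≤ C1)
    (hC1 : ∀ u : Euc N → ℝ, MemH2 u →
      (∫ x, |u x| ^ (2 * (N : ℝ) / ((N : ℝ) - 4))) ^ (((N : ℝ) - 4) / (N : ℝ)) ≤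
        C1 * ∫ x, (lap u x) ^ 2)
    {u : Euc N → ℝ} (hu : MemH2 u) :
    Integrable (fun x => |u x| ^ (2 * (N:ℝ) / ((N:ℝ) - 4))) volume := by
  have hn5 : (5:ℝ) ≤ (N:ℝ) := by exact_mod_cast hN
  have hn4 : (0:ℝ) < (N:ℝ) - 4 := by linarith
  have hnpos : (0:ℝ) < (N:ℝ) := by linarith
  set qe : ℝ := 2 * (N:ℝ) / ((N:ℝ) - 4) with hqe_def
  have hqe : 0 < qe := by rw [hqe_def]; positivity
  set θ : ℝ := ((N:ℝ) - 4) / (N:ℝ) with hθ_def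
  have hθ : 0 < θ := by rw [hθ_def]; positivity
  have hucont : Continuous u := hu.1.continuous
  have hfc : Continuous (fun x => |u x| ^ qe) := continuous_rpow_abs hucont hqe
  have hnn : ∀ x : Euc N, 0 ≤ |u x| ^ qe := fun x => by positivity
  refine ⟨hfc.aestronglyMeasurable, ?_⟩
  rw [hasFiniteIntegral_iff_ofReal (Filter.Eventually.of_forall hnn)]
  by_contra hinf0
  have hinf : (∫⁻ x, ENNReal.ofReal (|u x| ^ qe)) = ⊤ := top_le_iff.mp (not_lt.mp hinf0)
  -- bump function
  set χ : ContDiffBump (0 : Euc N) := ⟨1, 2, one_pos, one_lt_two⟩ with hχdef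
  have hχsm : ContDiff ℝ 2 (χ : Euc N → ℝ) := χ.contDiff
  have hχcs : HasCompactSupport (χ : Euc N → ℝ) := χ.hasCompactSupport
  -- bounds for the derivatives of χ
  obtain ⟨K1, hK1⟩ : ∃ K1, ∀ y, ‖fderiv ℝ (χ : Euc N → ℝ) y‖ ≤ K1 := by
    have hc : Continuous (fderiv ℝ (χ : Euc N → ℝ)) :=
      (hχsm.fderiv_right (m := 1) (by norm_num)).continuous
    exact (hχcs.fderiv ℝ).exists_bound_of_continuous hc
  obtain ⟨K2, hK2⟩ : ∃ K2, ∀ y, ‖iteratedFDeriv ℝ 2 (χ : Euc N → ℝ) y‖ ≤ K2 := by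
    have hc : Continuous (iteratedFDeriv ℝ 2 (χ : Euc N → ℝ)) :=
      hχsm.continuous_iteratedFDeriv (le_refl _)
    exact (hχcs.iteratedFDeriv 2).exists_bound_of_continuous hc
  have hK1_0 : 0 ≤ K1 := le_trans (norm_nonneg _) (hK1 0)
  have hK2_0 : 0 ≤ K2 := le_trans (norm_nonneg _) (hK2 0)
  -- dominating function
  set g₀ : Euc N → ℝ := fun x => (∑ i, |d2 u i i x|) +
      ((2*K1) * ∑ i, |fderiv ℝ u x (EuclideanSpace.single i 1)| + ((N:ℝ)*K2) * |u x|) with hg₀def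
  have hg₀L2 : MemLp g₀ 2 (volume : Measure (Euc N)) := by
    have h1 : MemLp (fun x => ∑ i : Fin N, |d2 u i i x|) 2 (volume : Measure (Euc N)) :=
      memLp_finset_sum Finset.univ (fun i _ => by
        simpa [Real.norm_eq_abs] using (hu.2.2.2 i i).norm)
    have h2 : MemLp (fun x => ∑ i : Fin N, |fderiv ℝ u x (EuclideanSpace.single i 1)|) 2
        (volume : Measure (Euc N)) :=
      memLp_finset_sum Finset.univ (fun i _ => by
        simpa [Real.norm_eq_abs] using (hu.2.2.1 i).norm)
    have h3 : MemLp (fun x => |u x|) 2 (volume : Measure (Euc N)) := by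
      simpa [Real.norm_eq_abs] using hu.2.1.norm
    exact h1.add ((h2.const_mul (2*K1)).add (h3.const_mul ((N:ℝ)*K2)))
  have hg₀sq : Integrable (fun x => g₀ x ^ 2) volume := hg₀L2.integrable_sq
  have hg₀nn : ∀ x, 0 ≤ g₀ x := by
    intro x; rw [hg₀def]
    have : (0:ℝ) ≤ ∑ i : Fin N, |d2 u i i x| := Finset.sum_nonneg fun i _ => abs_nonneg _
    have : (0:ℝ) ≤ ∑ i : Fin N, |fderiv ℝ u x (EuclideanSpace.single i 1)| :=
      Finset.sum_nonneg fun i _ => abs_nonneg _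
    positivity
  set S : ℝ := C1 * ∫ x, g₀ x ^ 2 with hSdef
  set B : ℝ := max S 0 ^ (1/θ) with hBdef
  have hB0 : 0 ≤ B := by rw [hBdef]; positivity
  -- choose a large ball capturing more than B of the mass
  obtain ⟨m, hm1, hmB⟩ : ∃ m : ℕ, 1 ≤ (m:ℝ) ∧
      ENNReal.ofReal B < ∫⁻ x in Metric.ball (0 : Euc N) (m:ℝ), ENNReal.ofReal (|u x| ^ qe) := by
    set Fn : ℕ → Euc N → ℝ≥0∞ := fun n =>
      (Metric.ball (0:Euc N) (n:ℝ)).indicator (fun x => ENNReal.ofReal (|u x| ^ qe)) with hFn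
    have hmeas : ∀ n, Measurable (Fn n) := fun n =>
      (ENNReal.measurable_ofReal.comp hfc.measurable).indicator Metric.isOpen_ball.measurableSet
    have hmono : Monotone Fn := fun a b hab => by
      intro x
      exact Set.indicator_le_indicator_of_subset
        (Metric.ball_subset_ball (by exact_mod_cast hab)) (fun y => by positivity) x
    have hsup : ∀ x, (⨆ n, Fn n x) = ENNReal.ofReal (|u x| ^ qe) := by
      intro x
      apply le_antisymm
      · refine iSup_le fun n => ?_
        by_cases hx : x ∈ Metric.ball (0:Euc N) (n:ℝ) <;> simp [hFn, hx]
      · obtain ⟨n, hn⟩ := exists_nat_gt ‖x‖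
        have hx : x ∈ Metric.ball (0:Euc N) (n:ℝ) := by
          simpa [Metric.mem_ball, dist_zero_right] using hn
        have : Fn n x = ENNReal.ofReal (|u x| ^ qe) := by simp [hFn, hx]
        rw [← this]
        exact le_iSup (fun k => Fn k x) n
    have hls := lintegral_iSup (μ := (volume : Measure (Euc N))) hmeas hmono
    rw [lintegral_congr (fun x => hsup x), hinf] at hls
    have hlt : ENNReal.ofReal B < ⨆ n, ∫⁻ x, Fn n x := by
      rw [← hls]; exact ENNReal.ofReal_lt_top
    obtain ⟨n, hn⟩ := lt_iSup_iff.mp hlt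
    refine ⟨n+1, by exact_mod_cast Nat.one_le_iff_ne_zero.mpr (Nat.succ_ne_zero n), ?_⟩
    have h1 : (∫⁻ x, Fn n x) = ∫⁻ x in Metric.ball (0:Euc N) (n:ℝ), ENNReal.ofReal (|u x| ^ qe) := by
      rw [hFn]; exact lintegral_indicator Metric.isOpen_ball.measurableSet _
    rw [h1] at hn
    refine lt_of_lt_of_le hn (lintegral_mono_set (Metric.ball_subset_ball ?_))
    exact_mod_cast Nat.le_succ n
  -- the rescaled cut-off
  set L : Euc N →L[ℝ] Euc N := (m:ℝ)⁻¹ • ContinuousLinearMap.id ℝ (Euc N) with hLdef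
  have hLx : ∀ x : Euc N, L x = (m:ℝ)⁻¹ • x := fun x => rfl
  have hmpos : (0:ℝ) < m := lt_of_lt_of_le one_pos hm1
  have hminv : (m:ℝ)⁻¹ ≤ 1 := by
    rw [inv_le_one_iff₀]; right; exact hm1
  have hLnorm : ∀ v : Euc N, ‖L v‖ ≤ ‖v‖ := by
    intro v
    rw [hLx, norm_smul, Real.norm_eq_abs, abs_of_pos (inv_pos.mpr hmpos)]
    calc (m:ℝ)⁻¹ * ‖v‖ ≤ 1 * ‖v‖ := mul_le_mul_of_nonneg_right hminv (norm_nonneg v)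
      _ = ‖v‖ := one_mul _
  set χm : Euc N → ℝ := fun x => χ (L x) with hχmdef
  have hχm_eq : χm = (χ : Euc N → ℝ) ∘ L := rfl
  have hχmc : ContDiff ℝ 2 χm := hχsm.comp L.contDiff
  have hχm0 : ∀ x, 0 ≤ χm x := fun x => χ.nonneg
  have hχm1 : ∀ x, χm x ≤ 1 := fun x => χ.le_one
  have hχmcs : HasCompactSupport χm := by
    apply HasCompactSupport.intro (isCompact_closedBall (0 : Euc N) (2*(m:ℝ)))
    intro x hx
    apply χ.zero_of_le_dist
    have hxn : 2*(m:ℝ) < ‖x‖ := by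
      simpa [Metric.mem_closedBall, dist_zero_right, not_le] using hx
    have hd : dist (L x) 0 = (m:ℝ)⁻¹ * ‖x‖ := by
      rw [dist_zero_right, hLx, norm_smul, Real.norm_eq_abs, abs_of_pos (inv_pos.mpr hmpos)]
    rw [hd]
    show (2:ℝ) ≤ _
    have h2 : (m:ℝ)⁻¹ * (2*(m:ℝ)) = 2 := by field_simp
    have := mul_lt_mul_of_pos_left hxn (inv_pos.mpr hmpos)
    linarith
  set um : Euc N → ℝ := fun x => χm x * u x with humdef
  have humc : ContDiff ℝ 2 um := hχmc.mul hu.1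
  have humcs : HasCompactSupport um := hχmcs.mul_right
  have hum2 : MemH2 um := by
    refine ⟨humc, humc.continuous.memLp_of_hasCompactSupport humcs, fun i => ?_, fun i j => ?_⟩
    · have hcont : Continuous (fun x => fderiv ℝ um x (EuclideanSpace.single i 1)) :=
        ((humc.fderiv_right (m := 1) (by norm_num)).continuous).clm_apply continuous_const
      exact hcont.memLp_of_hasCompactSupport (humcs.fderiv_apply ℝ _)
    · have hcont := continuous_d2 humc i j
      have hcs : HasCompactSupport (d2 um i j) :=
        (humcs.iteratedFDeriv 2).comp_left
          (g := fun T : ContinuousMultilinearMap ℝ (fun _ : Fin 2 => Euc N) ℝ =>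
            T ![EuclideanSpace.single i 1, EuclideanSpace.single j 1]) rfl
      exact hcont.memLp_of_hasCompactSupport hcs
  -- pointwise bound |lap um| ≤ g₀
  have hbd1 : ∀ x i, |fderiv ℝ χm x (EuclideanSpace.single i (1:ℝ))| ≤ K1 := by
    intro x i
    have hder : fderiv ℝ χm x = (fderiv ℝ (χ : Euc N → ℝ) (L x)).comp (L : Euc N →L[ℝ] Euc N) := by
      rw [hχm_eq]
      rw [fderiv_comp x ((hχsm.differentiable (by norm_num)) (L x)) L.differentiableAt,
        L.fderiv]
    rw [hder]
    calc |(fderiv ℝ (χ : Euc N → ℝ) (L x)).comp (L : Euc N →L[ℝ] Euc N) (EuclideanSpace.single i (1:ℝ))|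
        = ‖fderiv ℝ (χ : Euc N → ℝ) (L x) (L (EuclideanSpace.single i (1:ℝ)))‖ := by
          rw [ContinuousLinearMap.comp_apply, Real.norm_eq_abs]
      _ ≤ ‖fderiv ℝ (χ : Euc N → ℝ) (L x)‖ * ‖L (EuclideanSpace.single i (1:ℝ))‖ :=
          ContinuousLinearMap.le_opNorm _ _
      _ ≤ K1 * 1 := by
          apply mul_le_mul (hK1 _) _ (norm_nonneg _) hK1_0
          exact le_trans (hLnorm _) (le_of_eq (norm_single_one i))
      _ = K1 := mul_one _
  have hbd2 : ∀ x i, |d2 χm i i x| ≤ K2 := by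
    intro x i
    have hder : iteratedFDeriv ℝ 2 χm x =
        (iteratedFDeriv ℝ 2 (χ : Euc N → ℝ) (L x)).compContinuousLinearMap (fun _ => L) := by
      rw [hχm_eq]
      exact L.iteratedFDeriv_comp_right hχsm x (by norm_num)
    have hd2 : d2 χm i i x = (iteratedFDeriv ℝ 2 (χ : Euc N → ℝ) (L x))
        (fun k => L (![EuclideanSpace.single i (1:ℝ), EuclideanSpace.single i 1] k)) := by
      rw [d2, hder, ContinuousMultilinearMap.compContinuousLinearMap_apply]
    rw [hd2, ← Real.norm_eq_abs]
    refine le_trans (ContinuousMultilinearMap.le_opNorm _ _) ?_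
    have hprod : (∏ k : Fin 2,
        ‖L (![EuclideanSpace.single i (1:ℝ), EuclideanSpace.single i 1] k)‖) ≤ 1 := by
      apply Finset.prod_le_one (fun k _ => norm_nonneg _)
      intro k _
      refine le_trans (hLnorm _) ?_
      fin_cases k <;> simp [norm_single_one]
    refine le_trans (mul_le_mul (hK2 _) hprod
      (Finset.prod_nonneg fun k _ => norm_nonneg _) hK2_0) ?_
    rw [mul_one]
  have hlap_bound : ∀ x, |lap um x| ≤ g₀ x := by
    intro x
    have hterm : ∀ i : Fin N, |d2 um i i x| ≤ |d2 u i i x|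
        + 2*K1 * |fderiv ℝ u x (EuclideanSpace.single i 1)| + K2 * |u x| := by
      intro i
      have hprod := d2_mul hχmc hu.1 i i x
      have hum_eq : d2 um i i x = d2 (fun y => χm y * u y) i i x := rfl
      rw [hum_eq, hprod]
      have hb1 : |χm x * d2 u i i x| ≤ |d2 u i i x| := by
        rw [abs_mul, abs_of_nonneg (hχm0 x)]
        exact mul_le_of_le_one_left (abs_nonneg _) (hχm1 x)
      have hb2 : |fderiv ℝ χm x (EuclideanSpace.single i 1) *
          fderiv ℝ u x (EuclideanSpace.single i 1)| ≤
          K1 * |fderiv ℝ u x (EuclideanSpace.single i 1)| := by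
        rw [abs_mul]
        exact mul_le_mul_of_nonneg_right (hbd1 x i) (abs_nonneg _)
      have hb3 : |fderiv ℝ u x (EuclideanSpace.single i 1) *
          fderiv ℝ χm x (EuclideanSpace.single i 1)| ≤
          K1 * |fderiv ℝ u x (EuclideanSpace.single i 1)| := by
        rw [abs_mul, mul_comm]
        exact mul_le_mul_of_nonneg_right (hbd1 x i) (abs_nonneg _)
      have hb4 : |u x * d2 χm i i x| ≤ K2 * |u x| := by
        rw [abs_mul, mul_comm]
        exact mul_le_mul_of_nonneg_right (hbd2 x i) (abs_nonneg _)
      calc |χm x * d2 u i i x + fderiv ℝ χm x (EuclideanSpace.single i 1) *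
            fderiv ℝ u x (EuclideanSpace.single i 1) +
            fderiv ℝ u x (EuclideanSpace.single i 1) * fderiv ℝ χm x (EuclideanSpace.single i 1)
            + u x * d2 χm i i x|
          ≤ |χm x * d2 u i i x| + |fderiv ℝ χm x (EuclideanSpace.single i 1) *
            fderiv ℝ u x (EuclideanSpace.single i 1)| +
            |fderiv ℝ u x (EuclideanSpace.single i 1) * fderiv ℝ χm x (EuclideanSpace.single i 1)|
            + |u x * d2 χm i i x| := by
              exact (abs_add_le _ _).trans (add_le_add_left (abs_add_three _ _ _) _)
        _ ≤ |d2 u i i x| + K1 * |fderiv ℝ u x (EuclideanSpace.single i 1)|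
            + K1 * |fderiv ℝ u x (EuclideanSpace.single i 1)| + K2 * |u x| := by
              gcongr
        _ = |d2 u i i x| + 2*K1 * |fderiv ℝ u x (EuclideanSpace.single i 1)| + K2 * |u x| := by
              ring
    calc |lap um x| ≤ ∑ i, |d2 um i i x| := Finset.abs_sum_le_sum_abs _ _
      _ ≤ ∑ i : Fin N, (|d2 u i i x|
          + 2*K1 * |fderiv ℝ u x (EuclideanSpace.single i 1)| + K2 * |u x|) :=
          Finset.sum_le_sum (fun i _ => hterm i)
      _ = g₀ x := by
          rw [hg₀def]
          simp only [Finset.sum_add_distrib, ← Finset.mul_sum, Finset.sum_const,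
            Finset.card_univ, Fintype.card_fin, nsmul_eq_mul]
          ring
  -- integral bound via hC1
  have hlapsq_int : Integrable (fun x => (lap um x)^2) volume := by
    refine Integrable.mono' hg₀sq ((continuous_lap humc).pow 2).aestronglyMeasurable ?_
    refine Filter.Eventually.of_forall fun x => ?_
    rw [Real.norm_eq_abs, abs_of_nonneg (sq_nonneg _), ← sq_abs]
    exact pow_le_pow_left₀ (abs_nonneg _) (hlap_bound x) 2
  have hlap_le : (∫ x, (lap um x)^2) ≤ ∫ x, g₀ x ^ 2 := by
    refine integral_mono hlapsq_int hg₀sq fun x => ?_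
    rw [← sq_abs (lap um x)]
    exact pow_le_pow_left₀ (abs_nonneg _) (hlap_bound x) 2
  have hIm_le : (∫ x, |um x| ^ qe) ^ θ ≤ S := by
    refine le_trans (hC1 um hum2) ?_
    rw [hSdef]
    exact mul_le_mul_of_nonneg_left hlap_le hC1nn
  -- lower bound
  have humcont := humc.continuous
  have hfmint : Integrable (fun x => |um x| ^ qe) volume := by
    refine (continuous_rpow_abs humcont hqe).integrable_of_hasCompactSupport ?_
    exact humcs.comp_left (g := fun t : ℝ => |t| ^ qe) (by simp [Real.zero_rpow hqe.ne'])
  have heq_ball : ∫ x in Metric.ball (0:Euc N) (m:ℝ), |um x| ^ qe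
      = ∫ x in Metric.ball (0:Euc N) (m:ℝ), |u x| ^ qe := by
    refine setIntegral_congr_fun Metric.isOpen_ball.measurableSet fun x hx => ?_
    have hxm : ‖x‖ < (m:ℝ) := by simpa [Metric.mem_ball, dist_zero_right] using hx
    have hL1 : L x ∈ Metric.closedBall (0:Euc N) 1 := by
      rw [Metric.mem_closedBall, dist_zero_right, hLx, norm_smul, Real.norm_eq_abs,
        abs_of_pos (inv_pos.mpr hmpos)]
      have h1 : (m:ℝ)⁻¹ * ‖x‖ ≤ (m:ℝ)⁻¹ * (m:ℝ) :=
        mul_le_mul_of_nonneg_left hxm.le (inv_pos.mpr hmpos).le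
      rwa [inv_mul_cancel₀ hmpos.ne'] at h1
    have hone : χm x = 1 := χ.one_of_mem_closedBall hL1
    simp [humdef, hone]
  have hlower : B < ∫ x, |um x| ^ qe := by
    have h1 : ∫ x in Metric.ball (0:Euc N) (m:ℝ), |u x| ^ qe
        = (∫⁻ x in Metric.ball (0:Euc N) (m:ℝ), ENNReal.ofReal (|u x| ^ qe)).toReal := by
      rw [integral_eq_lintegral_of_nonneg_ae (Filter.Eventually.of_forall fun x => hnn x)
        hfc.aestronglyMeasurable]
    have hIOn : IntegrableOn (fun x => |u x| ^ qe) (Metric.ball (0:Euc N) (m:ℝ)) volume :=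
      (hfc.continuousOn.integrableOn_compact (isCompact_closedBall _ _)).mono_set
        Metric.ball_subset_closedBall
    have hfin : (∫⁻ x in Metric.ball (0:Euc N) (m:ℝ), ENNReal.ofReal (|u x| ^ qe)) ≠ ⊤ := by
      rw [← ofReal_integral_eq_lintegral_ofReal hIOn (Filter.Eventually.of_forall fun x => hnn x)]
      exact ENNReal.ofReal_ne_top
    have h2 : B < ∫ x in Metric.ball (0:Euc N) (m:ℝ), |u x| ^ qe := by
      rw [h1]
      have hlt := (ENNReal.toReal_lt_toReal ENNReal.ofReal_ne_top hfin).mpr hmB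
      rwa [ENNReal.toReal_ofReal hB0] at hlt
    calc B < ∫ x in Metric.ball (0:Euc N) (m:ℝ), |u x| ^ qe := h2
      _ = ∫ x in Metric.ball (0:Euc N) (m:ℝ), |um x| ^ qe := heq_ball.symm
      _ ≤ ∫ x, |um x| ^ qe := setIntegral_le_integral hfmint
          (Filter.Eventually.of_forall fun x => by positivity)
  -- contradiction
  have hBθ : B ^ θ = max S 0 := by
    rw [hBdef, ← Real.rpow_mul (le_max_right S 0), one_div, inv_mul_cancel₀ hθ.ne',
      Real.rpow_one]
  have hgt : B ^ θ < (∫ x, |um x| ^ qe) ^ θ := Real.rpow_lt_rpow hB0 hlower hθ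
  rw [hBθ] at hgt
  exact absurd hIm_le (not_le.mpr (lt_of_le_of_lt (le_max_left S 0) hgt))


lemma memL2_lap {u : Euc N → ℝ} (hu : MemH2 u) : MemLp (lap u) 2 (volume : Measure (Euc N)) := by
  have h : MemLp (fun x => ∑ i : Fin N, d2 u i i x) 2 (volume : Measure (Euc N)) :=
    memLp_finset_sum Finset.univ (fun i _ => hu.2.2.2 i i)
  exact h

lemma holder_ball (hN : 5 ≤ N) {u : Euc N → ℝ} (hu : Continuous u)
    (hq : Integrable (fun x => |u x| ^ (2 * (N:ℝ) / ((N:ℝ) - 4))) volume)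
    {s : Set (Euc N)} (hs : MeasurableSet s) (hsfin : volume s ≠ ⊤) :
    ∫ x in s, (u x)^2 ≤
      (volume s).toReal ^ (4 / (N:ℝ)) *
        (∫ x, |u x| ^ (2 * (N:ℝ) / ((N:ℝ) - 4))) ^ (((N:ℝ) - 4) / (N:ℝ)) := by
  have hn5 : (5:ℝ) ≤ (N:ℝ) := by exact_mod_cast hN
  have hn4 : (0:ℝ) < (N:ℝ) - 4 := by linarith
  have hnpos : (0:ℝ) < (N:ℝ) := by linarith
  set p : ℝ := (N:ℝ)/4 with hp
  set p' : ℝ := (N:ℝ)/((N:ℝ)-4) with hp'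
  have hpq : p.HolderConjugate p' := by
    rw [Real.holderConjugate_iff]; constructor
    · rw [hp]; rw [lt_div_iff₀ (by norm_num : (0:ℝ) < 4)]; linarith
    · rw [hp, hp']; field_simp; ring
  set F : Euc N → ℝ≥0∞ := s.indicator 1 with hF
  set G : Euc N → ℝ≥0∞ := fun x => ENNReal.ofReal ((u x)^2) with hG
  have hFm : AEMeasurable F volume := (measurable_one.indicator hs).aemeasurable
  have hGm : AEMeasurable G volume :=
    (ENNReal.measurable_ofReal.comp ((hu.pow 2).measurable)).aemeasurable
  have h := ENNReal.lintegral_mul_le_Lp_mul_Lq volume hpq hFm hGm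
  have hfg : ∀ x, (F * G) x = s.indicator G x := by
    intro x; by_cases hx : x ∈ s <;> simp [hF, hx, Set.indicator_of_mem, Set.indicator_of_notMem]
  rw [show (∫⁻ a, (F * G) a) = ∫⁻ a, s.indicator G a from lintegral_congr hfg,
    lintegral_indicator hs] at h
  have hFp : (∫⁻ a, F a ^ p) = volume s := by
    have : ∀ a, F a ^ p = s.indicator 1 a := by
      intro a; by_cases ha : a ∈ s <;>
        simp [hF, ha, ENNReal.zero_rpow_of_pos hpq.pos]
    rw [lintegral_congr this, lintegral_indicator hs]
    simp
  have hGq : (∫⁻ a, G a ^ p') = ENNReal.ofReal (∫ x, |u x| ^ (2 * (N:ℝ) / ((N:ℝ) - 4))) := by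
    have hptw : ∀ a, G a ^ p' = ENNReal.ofReal (|u a| ^ (2 * (N:ℝ) / ((N:ℝ) - 4))) := by
      intro a
      have hGa : G a = ENNReal.ofReal ((u a)^2) := rfl
      rw [hGa, ENNReal.ofReal_rpow_of_nonneg (sq_nonneg _) (by positivity)]
      congr 1
      rw [show (u a)^2 = |u a| ^ (2:ℝ) by rw [Real.rpow_two, sq_abs],
        ← Real.rpow_mul (abs_nonneg _)]
      congr 1
      rw [hp']; ring
    rw [lintegral_congr hptw, ← ofReal_integral_eq_lintegral_ofReal hq]
    exact Filter.Eventually.of_forall fun x => by positivity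
  rw [hFp, hGq] at h
  -- convert LHS
  have hL : ∫ x in s, (u x)^2 = (∫⁻ x in s, G x).toReal := by
    rw [integral_eq_lintegral_of_nonneg_ae (Filter.Eventually.of_forall fun x => sq_nonneg _)
      ((hu.pow 2).aestronglyMeasurable)]
  have hIpos : (0:ℝ) ≤ ∫ x, |u x| ^ (2 * (N:ℝ) / ((N:ℝ) - 4)) :=
    integral_nonneg fun x => by positivity
  have hRfin : (volume s) ^ (1/p) *
      (ENNReal.ofReal (∫ x, |u x| ^ (2 * (N:ℝ) / ((N:ℝ) - 4)))) ^ (1/p') ≠ ⊤ := by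
    apply ENNReal.mul_ne_top
    · exact ENNReal.rpow_ne_top_of_nonneg (by positivity) hsfin
    · exact ENNReal.rpow_ne_top_of_nonneg (by positivity) ENNReal.ofReal_ne_top
  have := ENNReal.toReal_mono hRfin h
  rw [hL]
  have e1 : 1/p = 4/(N:ℝ) := by rw [hp, one_div_div]
  have e2 : 1/p' = ((N:ℝ)-4)/(N:ℝ) := by rw [hp', one_div_div]
  rw [e1, e2] at this
  refine le_trans this (le_of_eq ?_)
  rw [ENNReal.toReal_mul, ← ENNReal.toReal_rpow, ← ENNReal.toReal_rpow,
    ENNReal.toReal_ofReal hIpos]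


theorem stmt_1 {N : ℕ} (hN : 5 ≤ N) (V : Euc N → ℝ) (Vinf dlt : ℝ)
    (Om : Set (Euc N)) (hOmdef : Om = interior (V ⁻¹' {0}))
    (hVcont : Continuous V) (hVnonneg : ∀ x, 0 ≤ V x)
    (hVinf : Filter.liminf (fun x => (V x : EReal)) (Filter.cocompact (Euc N)) = (Vinf : EReal))
    (hVinfpos : 0 < Vinf)
    (hOmne : Om.Nonempty) (hOmbd : Bornology.IsBounded Om)
    (hOmconn : IsConnected Om) (hOmsm : HasSmoothBoundary Om)
    (hdlt : 0 < dlt) (hdltmu : dlt < mu0 Om)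
    (R C1 : ℝ) (hR : 0 < R)
    (hRball : {x : Euc N | V x ≤ Vinf / 2} ⊆ Metric.ball (0 : Euc N) R)
    (hC1pos : 0 < C1)
    (hC1 : ∀ u : Euc N → ℝ, MemH2 u →
      (∫ x, |u x| ^ (2 * (N : ℝ) / ((N : ℝ) - 4))) ^ (((N : ℝ) - 4) / (N : ℝ)) ≤ C1 * ∫ x, (lap u x) ^ 2) :
    ∃ C : ℝ, 0 < C ∧
      C = Real.sqrt ((Vinf / 2 + 1) / (Vinf / 2) +
            C1 * (volume (Metric.ball (0 : Euc N) R)).toReal ^ (4 / (N : ℝ))) ∧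
      ∀ lam, (Vinf / 2 + dlt) / (Vinf / 2) < lam → ∀ u : Euc N → ℝ, MemX V u →
        Real.sqrt (normH2sq u) ≤ C * Real.sqrt (normLam0Sq V lam dlt u) := by
  
  classical
  have hn5 : (5:ℝ) ≤ (N:ℝ) := by exact_mod_cast hN
  have hn4 : (0:ℝ) < (N:ℝ) - 4 := by linarith
  have hnpos : (0:ℝ) < (N:ℝ) := by linarith
  set M₀ : ℝ := Vinf / 2 with hM₀
  have hM₀pos : 0 < M₀ := by rw [hM₀]; positivity
  set vol : ℝ := (volume (Metric.ball (0 : Euc N) R)).toReal with hvol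
  have hvol0 : 0 ≤ vol := ENNReal.toReal_nonneg
  set Csq : ℝ := (M₀ + 1) / M₀ + C1 * vol ^ (4 / (N:ℝ)) with hCsq
  have hv4 : 0 ≤ C1 * vol ^ (4/(N:ℝ)) := by positivity
  have hCsq_pos : 0 < Csq := by
    have h1 : 0 < (M₀ + 1)/M₀ := by positivity
    rw [hCsq]; linarith
  refine ⟨Real.sqrt Csq, Real.sqrt_pos.mpr hCsq_pos, rfl, ?_⟩
  intro lam hlam u hu
  obtain ⟨huH2, huV⟩ := hu
  have hlam1 : (1:ℝ) < lam := by
    have h0 : (1:ℝ) < (M₀ + dlt)/M₀ := by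
      rw [lt_div_iff₀ hM₀pos]; linarith
    exact h0.trans hlam
  have hlampos : (0:ℝ) < lam := by linarith
  -- integrability facts
  have hlapL2 := memL2_lap huH2
  have hlapsq : Integrable (fun x => (lap u x)^2) volume := hlapL2.integrable_sq
  have husq : Integrable (fun x => (u x)^2) volume := huH2.2.1.integrable_sq
  have hucont : Continuous u := huH2.1.continuous
  have hVpc : Continuous (fun x => max (Vlam V lam dlt x) 0 * (u x)^2) := by
    have h1 : Continuous (fun x => Vlam V lam dlt x) := by
      unfold Vlam; exact (continuous_const.mul hVcont).sub continuous_const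
    exact (h1.max continuous_const).mul (hucont.pow 2)
  have hVp_int : Integrable (fun x => max (Vlam V lam dlt x) 0 * (u x)^2) volume := by
    refine Integrable.mono' (huV.const_mul lam) hVpc.aestronglyMeasurable ?_
    refine Filter.Eventually.of_forall fun x => ?_
    have hnn : 0 ≤ max (Vlam V lam dlt x) 0 * (u x)^2 :=
      mul_nonneg (le_max_right _ _) (sq_nonneg _)
    rw [Real.norm_eq_abs, abs_of_nonneg hnn]
    have hle : max (Vlam V lam dlt x) 0 ≤ lam * V x := by
      apply max_le
      · unfold Vlam; linarith
      · exact mul_nonneg hlampos.le (hVnonneg x)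
    calc max (Vlam V lam dlt x) 0 * (u x)^2 ≤ (lam * V x) * (u x)^2 :=
          mul_le_mul_of_nonneg_right hle (sq_nonneg _)
      _ = lam * (V x * (u x)^2) := by ring
  -- integral identities
  have hH2eq : normH2sq u = (∫ x, (lap u x)^2) + ∫ x, (u x)^2 := by
    unfold normH2sq; exact integral_add hlapsq husq
  have hL0eq : normLam0Sq V lam dlt u
      = (∫ x, (lap u x)^2) + ∫ x, max (Vlam V lam dlt x) 0 * (u x)^2 := by
    unfold normLam0Sq; exact integral_add hlapsq hVp_int
  have hA0 : 0 ≤ ∫ x, (lap u x)^2 := integral_nonneg fun x => sq_nonneg _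
  have hW0 : 0 ≤ ∫ x, max (Vlam V lam dlt x) 0 * (u x)^2 :=
    integral_nonneg fun x => mul_nonneg (le_max_right _ _) (sq_nonneg _)
  -- pointwise splitting
  have hsplit : ∀ x, (u x)^2 ≤ (Metric.ball (0:Euc N) R).indicator (fun x => (u x)^2) x
      + M₀⁻¹ * (max (Vlam V lam dlt x) 0 * (u x)^2) := by
    intro x
    have hnn2 : 0 ≤ M₀⁻¹ * (max (Vlam V lam dlt x) 0 * (u x)^2) :=
      mul_nonneg (inv_pos.mpr hM₀pos).le (mul_nonneg (le_max_right _ _) (sq_nonneg _))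
    by_cases hx : x ∈ Metric.ball (0:Euc N) R
    · rw [Set.indicator_of_mem hx]
      linarith
    · rw [Set.indicator_of_notMem hx]
      have hVx : M₀ < V x := by
        by_contra hle
        exact hx (hRball (by simpa [hM₀] using not_lt.mp hle))
      have hVlam : M₀ < Vlam V lam dlt x := by
        unfold Vlam
        have h1 : (M₀+dlt)/M₀ * M₀ < lam * M₀ := mul_lt_mul_of_pos_right hlam hM₀pos
        rw [div_mul_cancel₀ _ hM₀pos.ne'] at h1
        have h2 : lam * M₀ ≤ lam * V x := mul_le_mul_of_nonneg_left hVx.le hlampos.le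
        linarith
      have hmax : M₀ ≤ max (Vlam V lam dlt x) 0 := le_trans hVlam.le (le_max_left _ _)
      have hstep : (u x)^2 ≤ M₀⁻¹ * (max (Vlam V lam dlt x) 0 * (u x)^2) := by
        have h3 : M₀ * (u x)^2 ≤ max (Vlam V lam dlt x) 0 * (u x)^2 :=
          mul_le_mul_of_nonneg_right hmax (sq_nonneg _)
        have h4 := mul_le_mul_of_nonneg_left h3 (inv_pos.mpr hM₀pos).le
        calc (u x)^2 = M₀⁻¹ * (M₀ * (u x)^2) := by field_simp
          _ ≤ M₀⁻¹ * (max (Vlam V lam dlt x) 0 * (u x)^2) := h4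
      linarith
  -- integrate the splitting
  have hind_int : Integrable ((Metric.ball (0:Euc N) R).indicator (fun x => (u x)^2)) volume :=
    husq.indicator Metric.isOpen_ball.measurableSet
  have hBu : (∫ x, (u x)^2) ≤ (∫ x in Metric.ball (0:Euc N) R, (u x)^2)
      + M₀⁻¹ * ∫ x, max (Vlam V lam dlt x) 0 * (u x)^2 := by
    have hmono : (∫ x, (u x)^2)
        ≤ ∫ x, ((Metric.ball (0:Euc N) R).indicator (fun x => (u x)^2) x
          + M₀⁻¹ * (max (Vlam V lam dlt x) 0 * (u x)^2)) :=
      integral_mono husq (hind_int.add (hVp_int.const_mul M₀⁻¹)) hsplit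
    have heq : (∫ x, ((Metric.ball (0:Euc N) R).indicator (fun x => (u x)^2) x
          + M₀⁻¹ * (max (Vlam V lam dlt x) 0 * (u x)^2)))
        = (∫ x in Metric.ball (0:Euc N) R, (u x)^2)
          + M₀⁻¹ * ∫ x, max (Vlam V lam dlt x) 0 * (u x)^2 := by
      rw [integral_add hind_int (hVp_int.const_mul M₀⁻¹),
        integral_indicator Metric.isOpen_ball.measurableSet, integral_const_mul]
    rw [heq] at hmono
    exact hmono
  -- Sobolev + Hölder on the ball
  have hqint := integrable_rpow_of_memH2 hN hC1pos.le hC1 huH2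
  have hball := holder_ball hN hucont hqint
    (Metric.isOpen_ball.measurableSet : MeasurableSet (Metric.ball (0:Euc N) R))
    (measure_ball_lt_top).ne
  have hsob : (∫ x in Metric.ball (0:Euc N) R, (u x)^2)
      ≤ vol ^ (4/(N:ℝ)) * (C1 * ∫ x, (lap u x)^2) := by
    refine le_trans hball ?_
    rw [hvol]
    exact mul_le_mul_of_nonneg_left (hC1 u huH2) (by positivity)
  -- combine everything
  have hfinal : normH2sq u ≤ Csq * normLam0Sq V lam dlt u := by
    rw [hH2eq, hL0eq, hCsq]
    have e1 : (M₀+1)/M₀ = 1 + M₀⁻¹ := by field_simp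
    rw [e1]
    have hMinv : 0 < M₀⁻¹ := inv_pos.mpr hM₀pos
    nlinarith [mul_nonneg hv4 hW0, mul_nonneg hMinv.le hA0,
      mul_nonneg hv4 hA0, mul_nonneg hMinv.le hW0, hBu, hsob, hA0, hW0]
  have h1 : Real.sqrt (normH2sq u) ≤ Real.sqrt (Csq * normLam0Sq V lam dlt u) :=
    Real.sqrt_le_sqrt hfinal
  rwa [Real.sqrt_mul hCsq_pos.le] at h1
end
end

section
/- Let N ≥ 8, let Ω ⊂ ℝ^N be a bounded domain with 0 ∈ Ω, let r > 0 and let η : ℝ^N → ℝ be a smooth cutoff function with η ≡ 1 on B_r(0) and supp η ⊂ Ω, and set u_ε := η U_ε with U_ε(x) := c_N (ε/(ε² + |x|²))^{(N−4)/2}. Then there exists d > 0 such that, as ε → 0⁺: ∫_Ω u_ε² dx ≥ d ε⁴|ln ε| + O(ε⁴) if N = 8, and ∫_Ω u_ε² dx ≥ d ε⁴ + O(ε^{N−4}) if N ≥ 9. -/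
noncomputable section

open MeasureTheory Filter Topology Asymptotics

open Set Metric

lemma Ueps_continuous (N : ℕ) (cN e : ℝ) (he : 0 < e) : Continuous (Ueps N cN e) := by
  unfold Ueps
  refine continuous_const.mul ?_
  refine Continuous.rpow_const ?_ (fun x => Or.inl ?_)
  · exact continuous_const.div (continuous_const.add (continuous_norm.pow 2))
      (fun x => by positivity)
  · positivity

lemma aux_integrable {N : ℕ} (Om : Set (Euc N)) (hOmbd : Bornology.IsBounded Om)
    (cN e : ℝ) (he : 0 < e) (η : Euc N → ℝ) (hη : Continuous η)
    (hηsupp : tsupport η ⊆ Om) :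
    Integrable (fun x => (η x * Ueps N cN e x) ^ 2) volume := by
  have hc : Continuous fun x => (η x * Ueps N cN e x) ^ 2 :=
    (hη.mul (Ueps_continuous N cN e he)).pow 2
  refine hc.integrable_of_hasCompactSupport (HasCompactSupport.intro
    (Metric.isCompact_of_isClosed_isBounded isClosed_closure hOmbd.closure) ?_)
  intro x hx
  have : η x = 0 := image_eq_zero_of_notMem_tsupport
    (fun h => hx (subset_closure (hηsupp h)))
  simp [this]

lemma aux_setInt {N : ℕ} (Om : Set (Euc N)) (cN e : ℝ) (η : Euc N → ℝ)
    (hηsupp : tsupport η ⊆ Om) :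
    ∫ x in Om, (η x * Ueps N cN e x) ^ 2 = ∫ x, (η x * Ueps N cN e x) ^ 2 := by
  refine setIntegral_eq_integral_of_forall_compl_eq_zero (fun x hx => ?_)
  have : η x = 0 := image_eq_zero_of_notMem_tsupport (fun h => hx (hηsupp h))
  simp [this]

lemma branch8 (Om : Set (Euc 8)) (hOmbd : Bornology.IsBounded Om)
    (r cN : ℝ) (hr : 0 < r) (hcN : 0 < cN)
    (η : Euc 8 → ℝ) (hη : Continuous η)
    (hη1 : ∀ x ∈ Metric.ball (0 : Euc 8) r, η x = 1)
    (hηsupp : tsupport η ⊆ Om) (e : ℝ) (he : 0 < e) (her : e < r) :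
    (8 * (volume (ball (0 : Euc 8) 1)).toReal * (cN ^ 2 / 16)) *
        (e ^ 4 * (Real.log r - Real.log e))
      ≤ ∫ x in Om, (η x * Ueps 8 cN e x) ^ 2 := by
  set K : ℝ := cN ^ 2 / 16 with hK
  set f : ℝ → ℝ := Set.indicator (Ioo e r) (fun s => K * e ^ 4 / s ^ 8) with hf
  have hint := aux_integrable Om hOmbd cN e he η hη hηsupp
  -- pointwise bound
  have h1 : ∀ x : Euc 8, f ‖x‖ ≤ (η x * Ueps 8 cN e x) ^ 2 := by
    intro x
    by_cases hx : ‖x‖ ∈ Ioo e r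
    · rw [hf, Set.indicator_of_mem hx]
      obtain ⟨hxe, hxr⟩ := hx
      have hnx : (0 : ℝ) < ‖x‖ := lt_trans he hxe
      have hη1x : η x = 1 := hη1 x (by rw [mem_ball_zero_iff]; exact hxr)
      have hU : Ueps 8 cN e x = cN * (e / (e ^ 2 + ‖x‖ ^ 2)) ^ (2 : ℕ) := by
        unfold Ueps
        rw [show (((8 : ℕ) : ℝ) - 4) / 2 = ((2 : ℕ) : ℝ) by norm_num, Real.rpow_natCast]
      have hD : (0 : ℝ) < e ^ 2 + ‖x‖ ^ 2 := by positivity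
      have hb : e / (2 * ‖x‖ ^ 2) ≤ e / (e ^ 2 + ‖x‖ ^ 2) := by
        gcongr
        nlinarith
      have heq : K * e ^ 4 / ‖x‖ ^ 8 = cN ^ 2 * (e / (2 * ‖x‖ ^ 2)) ^ 4 := by
        rw [hK]; field_simp; ring
      have h4 : cN ^ 2 * (e / (2 * ‖x‖ ^ 2)) ^ 4 ≤ cN ^ 2 * (e / (e ^ 2 + ‖x‖ ^ 2)) ^ 4 := by
        gcongr
      have hfin : (η x * Ueps 8 cN e x) ^ 2 = cN ^ 2 * (e / (e ^ 2 + ‖x‖ ^ 2)) ^ 4 := by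
        rw [hη1x, hU]; ring
      rw [heq, hfin]
      exact h4
    · rw [hf, Set.indicator_of_notMem hx]
      exact sq_nonneg _
  -- identify f ∘ norm with an indicator on an annulus
  have h2 : (fun x : Euc 8 => f ‖x‖)
      = Set.indicator (ball (0 : Euc 8) r \ closedBall 0 e)
          (fun x => K * e ^ 4 / ‖x‖ ^ 8) := by
    funext x
    have hiff : ‖x‖ ∈ Ioo e r ↔ x ∈ ball (0 : Euc 8) r \ closedBall 0 e := by
      simp [Set.mem_Ioo, mem_ball_zero_iff, mem_closedBall_zero_iff, not_le, and_comm]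
    by_cases hx : ‖x‖ ∈ Ioo e r
    · rw [hf, Set.indicator_of_mem hx, Set.indicator_of_mem (hiff.mp hx)]
    · rw [hf, Set.indicator_of_notMem hx,
        Set.indicator_of_notMem (fun h => hx (hiff.mpr h))]
  -- integrability of f ∘ norm
  have h3 : Integrable (fun x : Euc 8 => f ‖x‖) volume := by
    rw [h2]
    have hmeas : MeasurableSet (ball (0 : Euc 8) r \ closedBall 0 e) :=
      measurableSet_ball.diff measurableSet_closedBall
    rw [integrable_indicator_iff hmeas]
    refine Measure.integrableOn_of_bounded (M := K * e ^ 4 / e ^ 8) ?_ ?_ ?_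
    · exact ((measure_mono Set.diff_subset).trans_lt measure_ball_lt_top).ne
    · exact (measurable_const.div ((measurable_norm.pow_const 8))).aestronglyMeasurable
    · filter_upwards [ae_restrict_mem hmeas] with x hx
      have hxe : e < ‖x‖ := by
        have := hx.2
        rw [mem_closedBall_zero_iff] at this
        exact lt_of_not_ge this
      rw [Real.norm_eq_abs, abs_of_nonneg (by positivity)]
      gcongr
  -- lower bound via the global integral
  have h4 : ∫ x : Euc 8, f ‖x‖ ≤ ∫ x in Om, (η x * Ueps 8 cN e x) ^ 2 := by
    rw [aux_setInt Om cN e η hηsupp]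
    exact integral_mono h3 hint h1
  -- polar coordinates
  have h5 : ∫ x : Euc 8, f ‖x‖
      = (8 : ℕ) • (volume (ball (0 : Euc 8) 1)).toReal •
          ∫ y in Ioi (0 : ℝ), y ^ (8 - 1 : ℕ) • f y := by
    have := MeasureTheory.integral_fun_norm_addHaar (volume : Measure (Euc 8)) f
    simpa [finrank_euclideanSpace_fin, measureReal_def] using this
  -- compute the radial integral
  have h6 : ∫ y in Ioi (0 : ℝ), y ^ (7 : ℕ) • f y
      = K * e ^ 4 * (Real.log r - Real.log e) := by
    have hfun : (fun y : ℝ => y ^ (7 : ℕ) • f y)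
        = Set.indicator (Ioo e r) (fun y => K * e ^ 4 * y⁻¹) := by
      funext y
      by_cases hy : y ∈ Ioo e r
      · have hy0 : y ≠ 0 := (lt_trans he hy.1).ne'
        rw [hf, Set.indicator_of_mem hy, Set.indicator_of_mem hy, smul_eq_mul]
        field_simp
      · rw [hf, Set.indicator_of_notMem hy, Set.indicator_of_notMem hy, smul_eq_mul,
          mul_zero]
    rw [hfun, setIntegral_indicator measurableSet_Ioo,
      show Ioi (0 : ℝ) ∩ Ioo e r = Ioo e r from
        Set.inter_eq_right.mpr (fun y hy => lt_trans he hy.1),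
      MeasureTheory.integral_const_mul, ← integral_Ioc_eq_integral_Ioo,
      ← intervalIntegral.integral_of_le her.le, integral_inv_of_pos he hr,
      Real.log_div hr.ne' he.ne']
  calc (8 * (volume (ball (0 : Euc 8) 1)).toReal * (cN ^ 2 / 16)) *
        (e ^ 4 * (Real.log r - Real.log e))
      = (8 : ℕ) • (volume (ball (0 : Euc 8) 1)).toReal •
          (K * e ^ 4 * (Real.log r - Real.log e)) := by
        rw [nsmul_eq_mul, smul_eq_mul, hK]; push_cast; ring
    _ = ∫ x : Euc 8, f ‖x‖ := by rw [h5, show (8 - 1 : ℕ) = 7 by norm_num, h6]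
    _ ≤ ∫ x in Om, (η x * Ueps 8 cN e x) ^ 2 := h4


lemma alg9 {N : ℕ} (hN : 8 ≤ N) (cN e v : ℝ) (he : 0 < e) :
    (cN * ((2 * e)⁻¹ ^ (((N : ℝ) - 4) / 2))) ^ 2 * (e ^ N * v)
      = cN ^ 2 * (2 ^ ((N : ℝ) - 4))⁻¹ * v * e ^ 4 := by
  have hN4 : (4 : ℝ) ≤ (N : ℝ) := by exact_mod_cast (by omega : 4 ≤ N)
  have h2e : (0 : ℝ) < 2 * e := by linarith
  have hq : (0 : ℝ) ≤ (N : ℝ) - 4 := by linarith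
  rw [mul_pow, ← Real.rpow_natCast ((2 * e)⁻¹ ^ (((N : ℝ) - 4) / 2)) 2,
    ← Real.rpow_mul (by positivity), show ((N : ℝ) - 4) / 2 * ((2:ℕ):ℝ) = (N : ℝ) - 4 by push_cast; ring,
    Real.inv_rpow h2e.le, Real.mul_rpow (by norm_num) he.le,
    ← Real.rpow_natCast e N]
  have hsplit : (N : ℝ) = ((N : ℝ) - 4) + 4 := by ring
  rw [show e ^ (N : ℝ) = e ^ (((N : ℝ) - 4) + 4) by rw [← hsplit],
    Real.rpow_add he, show (4:ℝ) = ((4:ℕ):ℝ) by norm_num, Real.rpow_natCast]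
  have h1 : (0 : ℝ) < e ^ ((N : ℝ) - 4) := Real.rpow_pos_of_pos he _
  have h2 : (0 : ℝ) < (2 : ℝ) ^ ((N : ℝ) - 4) := Real.rpow_pos_of_pos two_pos _
  field_simp

lemma branch9 {N : ℕ} (hN : 8 ≤ N) (Om : Set (Euc N))
    (hOmbd : Bornology.IsBounded Om)
    (r cN : ℝ) (hr : 0 < r) (hcN : 0 < cN)
    (η : Euc N → ℝ) (hη : Continuous η)
    (hη1 : ∀ x ∈ Metric.ball (0 : Euc N) r, η x = 1)
    (hηsupp : tsupport η ⊆ Om) (e : ℝ) (he : 0 < e) (her : e < r) :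
    (cN ^ 2 * (2 ^ ((N : ℝ) - 4))⁻¹ * (volume (ball (0 : Euc N) 1)).toReal) * e ^ 4
      ≤ ∫ x in Om, (η x * Ueps N cN e x) ^ 2 := by
  haveI : Nonempty (Fin N) := Fin.pos_iff_nonempty.mp (by omega)
  have hN4 : (4 : ℝ) ≤ (N : ℝ) := by exact_mod_cast (by omega : 4 ≤ N)
  have hint := aux_integrable Om hOmbd cN e he η hη hηsupp
  set c : ℝ := (cN * ((2 * e)⁻¹ ^ (((N : ℝ) - 4) / 2))) ^ 2 with hc
  have hpt : ∀ x ∈ ball (0 : Euc N) e, c ≤ (η x * Ueps N cN e x) ^ 2 := by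
    intro x hx
    rw [mem_ball_zero_iff] at hx
    have hη1x : η x = 1 := hη1 x (by rw [mem_ball_zero_iff]; linarith)
    have hbase : (2 * e)⁻¹ ≤ e / (e ^ 2 + ‖x‖ ^ 2) := by
      have h1 : e ^ 2 + ‖x‖ ^ 2 ≤ 2 * e ^ 2 := by nlinarith [norm_nonneg x]
      have h2 : (2 * e)⁻¹ = e / (2 * e ^ 2) := by field_simp
      rw [h2]
      gcongr
    have hrp : (2 * e)⁻¹ ^ (((N : ℝ) - 4) / 2) ≤
        (e / (e ^ 2 + ‖x‖ ^ 2)) ^ (((N : ℝ) - 4) / 2) :=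
      Real.rpow_le_rpow (by positivity) hbase (by linarith)
    have hUc : cN * ((2 * e)⁻¹ ^ (((N : ℝ) - 4) / 2)) ≤ η x * Ueps N cN e x := by
      rw [hη1x, one_mul]
      unfold Ueps
      nlinarith [Real.rpow_nonneg (by positivity : (0:ℝ) ≤ (2*e)⁻¹) (((N : ℝ) - 4) / 2)]
    rw [hc]
    have h0 : 0 ≤ cN * ((2 * e)⁻¹ ^ (((N : ℝ) - 4) / 2)) := by positivity
    exact pow_le_pow_left₀ h0 hUc 2
  have hvol : (volume (ball (0 : Euc N) e)).toReal
      = e ^ N * (volume (ball (0 : Euc N) 1)).toReal := by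
    rw [Measure.addHaar_ball _ _ he.le, finrank_euclideanSpace_fin, ENNReal.toReal_mul,
      ENNReal.toReal_ofReal (by positivity)]
  calc (cN ^ 2 * (2 ^ ((N : ℝ) - 4))⁻¹ * (volume (ball (0 : Euc N) 1)).toReal) * e ^ 4
      = c * (volume (ball (0 : Euc N) e)).toReal := by
        rw [hvol, hc, alg9 hN cN e _ he]
    _ ≤ ∫ x in ball (0 : Euc N) e, (η x * Ueps N cN e x) ^ 2 :=
        setIntegral_ge_of_const_le_real measurableSet_ball measure_ball_lt_top.ne hpt
          hint.integrableOn
    _ ≤ ∫ x, (η x * Ueps N cN e x) ^ 2 :=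
        setIntegral_le_integral hint (Eventually.of_forall fun x => sq_nonneg _)
    _ = ∫ x in Om, (η x * Ueps N cN e x) ^ 2 := (aux_setInt Om cN e η hηsupp).symm


theorem stmt_19 {N : ℕ} (hN : 8 ≤ N) (Om : Set (Euc N))
    (hOmbd : Bornology.IsBounded Om) (h0 : (0 : Euc N) ∈ Om)
    (r cN : ℝ) (hr : 0 < r) (hcN : 0 < cN)
    (η : Euc N → ℝ) (hη : ContDiff ℝ (⊤ : ℕ∞) η)
    (hη1 : ∀ x ∈ Metric.ball (0 : Euc N) r, η x = 1)
    (hηsupp : tsupport η ⊆ Om) :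
    (N = 8 → ∃ d : ℝ, 0 < d ∧ ∃ g : ℝ → ℝ,
      g =O[nhdsWithin (0 : ℝ) (Set.Ioi 0)] (fun e : ℝ => e ^ (4 : ℕ)) ∧
      ∀ᶠ e in nhdsWithin (0 : ℝ) (Set.Ioi 0),
        d * e ^ 4 * |Real.log e| + g e ≤ ∫ x in Om, (η x * Ueps N cN e x) ^ 2) ∧
    (9 ≤ N → ∃ d : ℝ, 0 < d ∧ ∃ g : ℝ → ℝ,
      g =O[nhdsWithin (0 : ℝ) (Set.Ioi 0)] (fun e : ℝ => e ^ ((N : ℝ) - 4)) ∧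
      ∀ᶠ e in nhdsWithin (0 : ℝ) (Set.Ioi 0),
        d * e ^ 4 + g e ≤ ∫ x in Om, (η x * Ueps N cN e x) ^ 2) := by
  constructor
  · intro hN8
    subst hN8
    set v : ℝ := (volume (ball (0 : Euc 8) 1)).toReal with hv
    have hvpos : 0 < v :=
      ENNReal.toReal_pos (measure_ball_pos volume 0 one_pos).ne' measure_ball_lt_top.ne
    refine ⟨8 * v * (cN ^ 2 / 16), by positivity,
      fun e => 8 * v * (cN ^ 2 / 16) * Real.log r * e ^ 4, ?_, ?_⟩
    · exact (isBigO_refl (fun e : ℝ => e ^ (4 : ℕ)) _).const_mul_left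
        (8 * v * (cN ^ 2 / 16) * Real.log r)
    · filter_upwards [Ioo_mem_nhdsGT (lt_min hr one_pos)] with e he
      obtain ⟨he0, helt⟩ := he
      have her : e < r := lt_of_lt_of_le helt (min_le_left _ _)
      have he1 : e < 1 := lt_of_lt_of_le helt (min_le_right _ _)
      have h8 := branch8 Om hOmbd r cN hr hcN η hη.continuous hη1 hηsupp e he0 her
      calc 8 * v * (cN ^ 2 / 16) * e ^ 4 * |Real.log e| +
            8 * v * (cN ^ 2 / 16) * Real.log r * e ^ 4
          = 8 * v * (cN ^ 2 / 16) * (e ^ 4 * (Real.log r - Real.log e)) := by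
            rw [abs_of_neg (Real.log_neg he0 he1)]; ring
        _ ≤ ∫ x in Om, (η x * Ueps 8 cN e x) ^ 2 := h8
  · intro hN9
    haveI : Nonempty (Fin N) := Fin.pos_iff_nonempty.mp (by omega)
    set v : ℝ := (volume (ball (0 : Euc N) 1)).toReal with hv
    have hvpos : 0 < v :=
      ENNReal.toReal_pos (measure_ball_pos volume 0 one_pos).ne' measure_ball_lt_top.ne
    have hd : 0 < cN ^ 2 * ((2 : ℝ) ^ ((N : ℝ) - 4))⁻¹ * v := by positivity
    refine ⟨cN ^ 2 * ((2 : ℝ) ^ ((N : ℝ) - 4))⁻¹ * v, hd, fun _ => 0, isBigO_zero _ _, ?_⟩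
    filter_upwards [Ioo_mem_nhdsGT hr] with e he
    obtain ⟨he0, her⟩ := he
    have h9 := branch9 hN Om hOmbd r cN hr hcN η hη.continuous hη1 hηsupp e he0 her
    simpa using h9
end
end
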